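/- arXiv:2305.00184 — 3 statements merged into one kernel-verified Lean document; each statement's English description precedes it below -/
import Mathlib

section
/- Under the setting of the previous prefix-interval model, the greedy algorithm that processes requests in non-decreasing order of h_r and places each request at the lowest level with remaining capacity produces a feasible placement whenever the prefix-sum condition holds. -/
open Finset

/-- Load of a partial placement at level `j`. -/
def ffLoad {R : Type*} [Fintype R] [DecidableEq R] (y : R → Option ℕ) (j : ℕ) : ℕ :=
  (univ.filter (fun r => y r = some j)).card

/-- Lowest level `j ≤ hr` whose load is strictly below its capacity. -/
def lowestFree (C : ℕ → ℕ) (load : ℕ → ℕ) (hr : ℕ) : Option ℕ :=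
  (List.range (hr + 1)).find? (fun j => decide (load j < C j))

/-- Place one request at the lowest level with residual capacity within its
range (doing nothing if no such level exists). -/
def ffStep {R : Type*} [Fintype R] [DecidableEq R] (C : ℕ → ℕ) (h : R → ℕ)
    (y : R → Option ℕ) (r : R) : R → Option ℕ :=
  match lowestFree C (ffLoad y) (h r) with
  | some j => Function.update y r (some j)
  | none => y

/-- Greedy/first-fit: process the requests in the order of the list `l`,
placing each at the lowest level with residual capacity in its range. -/
def ffGreedy {R : Type*} [Fintype R] [DecidableEq R] (C : ℕ → ℕ) (h : R → ℕ)
    (l : List R) : R → Option ℕ :=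
  l.foldl (ffStep C h) (fun _ => none)

/-!
When the greedy reaches request `r`, every request placed so far has threshold at most `h r` and
`r` itself is unplaced, so strictly fewer than `#{r' | h r' ≤ h r} ≤ ∑_{j ≤ h r} C j` requests
occupy the levels `≤ h r`: one of them still has room.
-/

section FirstFit

variable {R : Type*} [Fintype R] [DecidableEq R]

lemma lowestFree_eq_none_iff {C load : ℕ → ℕ} {hr : ℕ} :
    lowestFree C load hr = none ↔ ∀ j ≤ hr, C j ≤ load j := by
  simp [lowestFree, List.find?_eq_none]

lemma le_and_lt_of_lowestFree_eq_some {C load : ℕ → ℕ} {hr j : ℕ}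
    (h : lowestFree C load hr = some j) : j ≤ hr ∧ load j < C j := by
  have hmem := List.mem_of_find?_eq_some h
  have hfree := List.find?_some h
  simp only [List.mem_range, decide_eq_true_eq] at hmem hfree
  exact ⟨Nat.lt_succ_iff.mp hmem, hfree⟩

lemma ffLoad_update_of_eq_none (y : R → Option ℕ) {r : R} (hr : y r = none) (j j' : ℕ) :
    ffLoad (Function.update y r (some j)) j' = ffLoad y j' + if j = j' then 1 else 0 := by
  unfold ffLoad
  split_ifs with hj
  · subst hj
    rw [← card_insert_of_notMem (a := r) (s := {r' | y r' = some j}) (by simp [hr])]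
    congr 1
    ext r'
    by_cases hr' : r' = r <;> simp [Function.update_apply, hr']
  · congr 1
    ext r'
    by_cases hr' : r' = r <;> simp [Function.update_apply, hr', hr, hj]

lemma sum_ffLoad_le_card (y : R → Option ℕ) (s : Finset ℕ) :
    ∑ j ∈ s, ffLoad y j ≤ #{r | y r ≠ none} := by
  unfold ffLoad
  rw [← card_biUnion]
  · exact card_le_card fun r => by simp +contextual
  · intro a _ b _ hab
    simp only [disjoint_left, mem_filter, mem_univ, true_and]
    intro r hra hrb
    exact hab (Option.some.inj (hra.symm.trans hrb))

lemma lowestFree_ne_none_of_card_lt {C : ℕ → ℕ} {y : R → Option ℕ} {ℓ : ℕ}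
    (hcard : #{r | y r ≠ none} < ∑ j ∈ range (ℓ + 1), C j) :
    lowestFree C (ffLoad y) ℓ ≠ none := by
  intro hnone
  have hfull := lowestFree_eq_none_iff.mp hnone
  have : ∑ j ∈ range (ℓ + 1), C j ≤ ∑ j ∈ range (ℓ + 1), ffLoad y j :=
    sum_le_sum fun j hj => hfull j (Nat.lt_succ_iff.mp (mem_range.mp hj))
  have := sum_ffLoad_le_card y (range (ℓ + 1))
  omega

lemma exists_ffStep_eq_update {C : ℕ → ℕ} {h : R → ℕ} {y : R → Option ℕ} {r : R}
    (hr : y r = none) (hplaced : ∀ r', y r' ≠ none → h r' ≤ h r)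
    (hprefix : #{r' | h r' ≤ h r} ≤ ∑ j ∈ range (h r + 1), C j) :
    ∃ j ≤ h r, ffLoad y j < C j ∧ ffStep C h y r = Function.update y r (some j) := by
  have hsub : ({r' | y r' ≠ none} : Finset R) ⊂ ({r' | h r' ≤ h r} : Finset R) :=
    (ssubset_iff_of_subset fun r' => by simpa using hplaced r').mpr ⟨r, by simp [hr]⟩
  obtain ⟨j, hj⟩ := Option.ne_none_iff_exists'.mp
    (lowestFree_ne_none_of_card_lt ((card_lt_card hsub).trans_le hprefix))
  obtain ⟨hjr, hjfree⟩ := le_and_lt_of_lowestFree_eq_some hj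
  exact ⟨j, hjr, hjfree, by simp [ffStep, hj]⟩

theorem foldl_ffStep_spec {C : ℕ → ℕ} {h : R → ℕ}
    (hprefix : ∀ r, #{r' | h r' ≤ h r} ≤ ∑ j ∈ range (h r + 1), C j) :
    ∀ (l : List R) (y : R → Option ℕ), l.Nodup → l.Pairwise (fun a b => h a ≤ h b) →
      (∀ r, y r = none ↔ r ∈ l) → (∀ r ∉ l, ∀ r' ∈ l, h r ≤ h r') →
      (∀ r j, y r = some j → j ≤ h r) → (∀ j, ffLoad y j ≤ C j) →
      (∀ r, ∃ j, l.foldl (ffStep C h) y r = some j ∧ j ≤ h r) ∧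
        ∀ j, ffLoad (l.foldl (ffStep C h) y) j ≤ C j
  | [], y, _, _, hpending, _, hlevel, hload => by
    refine ⟨fun r => ?_, hload⟩
    obtain ⟨j, hj⟩ := Option.ne_none_iff_exists'.mp fun hr => by simpa using (hpending r).mp hr
    exact ⟨j, hj, hlevel r j hj⟩
  | r₀ :: t, y, hnodup, hsorted, hpending, hbelow, hlevel, hload => by
    obtain ⟨hr₀t, hnodup⟩ := List.nodup_cons.mp hnodup
    obtain ⟨hr₀le, hsorted⟩ := List.pairwise_cons.mp hsorted
    have hr₀ : y r₀ = none := (hpending r₀).mpr List.mem_cons_self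
    obtain ⟨j₀, hj₀, hfree, hstep⟩ := exists_ffStep_eq_update hr₀
      (fun r hr => hbelow r (mt (hpending r).mpr hr) r₀ List.mem_cons_self) (hprefix r₀)
    rw [List.foldl_cons, hstep]
    refine foldl_ffStep_spec hprefix t _ hnodup hsorted (fun r => ?_) (fun r hrt r' hr' => ?_)
      (fun r j hj => ?_) (fun j => ?_)
    · by_cases hr : r = r₀
      · subst hr; simp [hr₀t]
      · simp [hpending r, hr]
    · by_cases hr : r = r₀
      · exact hr ▸ hr₀le r' hr'
      · exact hbelow r (by simp [hr, hrt]) r' (List.mem_cons_of_mem _ hr')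
    · by_cases hr : r = r₀
      · subst hr
        rw [Function.update_self, Option.some.injEq] at hj
        exact hj ▸ hj₀
      · exact hlevel r j (by simpa [Function.update_of_ne hr] using hj)
    · rw [ffLoad_update_of_eq_none y hr₀]
      split_ifs with hj
      · exact hj ▸ hfree
      · exact hload j

end FirstFit

/-- if the requests are processed in non-decreasing order of their
thresholds and the prefix-sum condition holds, the greedy (place each request
as low as possible) places every request and the result is feasible. -/
theorem stmt5 {R : Type*} [Fintype R] [DecidableEq R]
    (L : ℕ) (C : ℕ → ℕ) (h : R → ℕ) (hh : ∀ r, h r ≤ L)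
    (l : List R) (hnodup : l.Nodup) (hall : ∀ r : R, r ∈ l)
    (hsorted : l.Pairwise (fun a b => h a ≤ h b))
    (hprefix : ∀ ℓ ≤ L,
      (univ.filter (fun r => h r ≤ ℓ)).card ≤ ∑ j ∈ Finset.range (ℓ + 1), C j) :
    (∀ r, ∃ j, ffGreedy C h l r = some j ∧ j ≤ h r) ∧
    (∀ j, (univ.filter (fun r => ffGreedy C h l r = some j)).card ≤ C j) :=
  foldl_ffStep_spec (fun r => hprefix (h r) (hh r)) l _ hnodup hsorted
    (fun r => iff_of_true rfl (hall r)) (fun r hr => absurd (hall r) hr)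
    (fun _ _ hj => nomatch hj) (fun j => by simp [ffLoad])
end

section
/- In the prefix-interval model with unit demands, if the greedy algorithm (sorted by non-decreasing h_r, place as low as possible) fails on some request r, then no feasible placement exists: specifically, at the moment of failure all levels j ≤ h_r are full with requests r' having h_{r'} ≤ h_r, violating the prefix-sum condition at level h_r. -/
open Finset

/-!
When the greedy fails on `r`, every level `≤ h r` is already full (that is what failure of
`lowestFree` means), and, the list being sorted, only requests of threshold at most `h r` have
been placed so far. Counting these together with `r` itself gives more requests of threshold
`≤ h r` than the capacity of the levels `0, …, h r`, while any feasible placement puts all of them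
on those levels.
-/

section Placement

variable {R : Type*} [Fintype R]

def IsFeasiblePlacement (C : ℕ → ℕ) (h : R → ℕ) (y : R → ℕ) : Prop :=
  (∀ r, y r ≤ h r) ∧ ∀ j, #{r | y r = j} ≤ C j

theorem IsFeasiblePlacement.card_filter_le_sum {C : ℕ → ℕ} {h : R → ℕ} {y : R → ℕ}
    (hy : IsFeasiblePlacement C h y) (k : ℕ) :
    #{r | h r ≤ k} ≤ ∑ j ∈ range (k + 1), C j := by
  have hmaps : ((univ.filter fun r => h r ≤ k : Finset R) : Set R).MapsTo y (range (k + 1)) :=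
    fun r hr => by simpa [Nat.lt_succ_iff] using (hy.1 r).trans (mem_filter.mp (mem_coe.mp hr)).2
  rw [card_eq_sum_card_fiberwise hmaps]
  refine sum_le_sum fun j _ => (card_le_card fun r => ?_).trans (hy.2 j)
  simp only [mem_filter, mem_univ, true_and]
  exact And.right

variable [DecidableEq R]

theorem sum_ffLoad_le_card_isSome (y : R → Option ℕ) (s : Finset ℕ) :
    ∑ j ∈ s, ffLoad y j ≤ #{r | (y r).isSome} := by
  have hdisj : (s : Set ℕ).PairwiseDisjoint fun j => univ.filter fun r => y r = some j := by
    intro i _ j _ hij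
    simp only [Function.onFun, disjoint_left, mem_filter, mem_univ, true_and]
    rintro r hi hj
    exact hij (Option.some.inj (hi.symm.trans hj))
  unfold ffLoad
  rw [← card_biUnion hdisj]
  refine card_le_card fun r => ?_
  simp only [mem_biUnion, mem_filter, mem_univ, true_and]
  rintro ⟨j, -, hj⟩
  simp [hj]

theorem sum_range_lt_card_of_saturated (C : ℕ → ℕ) (h : R → ℕ) (y : R → Option ℕ) {k : ℕ}
    (hsat : ∀ j ≤ k, C j ≤ ffLoad y j) (hplaced : ∀ r, (y r).isSome → h r ≤ k)
    {r : R} (hr : y r = none) (hrk : h r ≤ k) :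
    ∑ j ∈ range (k + 1), C j < #{r' | h r' ≤ k} := by
  set placed : Finset R := {r' | (y r').isSome}
  have hsub : insert r placed ⊆ ({r' | h r' ≤ k} : Finset R) := by
    intro r' hr'
    simp only [placed, mem_insert, mem_filter, mem_univ, true_and] at hr' ⊢
    rcases hr' with rfl | hr'
    exacts [hrk, hplaced r' hr']
  have hr_notMem : r ∉ placed := by simp [placed, hr]
  calc ∑ j ∈ range (k + 1), C j
      ≤ ∑ j ∈ range (k + 1), ffLoad y j :=
        sum_le_sum fun j hj => hsat j (Nat.lt_succ_iff.mp (mem_range.mp hj))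
    _ ≤ #placed := sum_ffLoad_le_card_isSome y _
    _ < #(insert r placed) := by rw [card_insert_of_notMem hr_notMem]; omega
    _ ≤ #{r' | h r' ≤ k} := card_le_card hsub

theorem le_of_lowestFree_eq_none {C load : ℕ → ℕ} {k : ℕ} (hk : lowestFree C load k = none)
    {j : ℕ} (hj : j ≤ k) : C j ≤ load j := by
  simpa using List.find?_eq_none.mp hk j (List.mem_range.mpr (Nat.lt_succ_of_le hj))

section Greedy

variable (C : ℕ → ℕ) (h : R → ℕ)

theorem ffStep_apply_of_ne (y : R → Option ℕ) {s r : R} (hne : r ≠ s) :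
    ffStep C h y s r = y r := by
  rw [ffStep]
  cases lowestFree C (ffLoad y) (h s) with
  | none => rfl
  | some j => exact Function.update_of_ne hne _ _

theorem lowestFree_eq_none_of_ffStep_self_eq_none {y : R → Option ℕ} {r : R}
    (hr : ffStep C h y r r = none) : lowestFree C (ffLoad y) (h r) = none := by
  rcases hfree : lowestFree C (ffLoad y) (h r) with _ | j
  · rfl
  · simp [ffStep, hfree] at hr

theorem foldl_ffStep_apply_of_notMem {l : List R} (y : R → Option ℕ) {r : R} (hr : r ∉ l) :
    l.foldl (ffStep C h) y r = y r := by
  induction l generalizing y with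
  | nil => rfl
  | cons s t ih =>
    rw [List.mem_cons, not_or] at hr
    rw [List.foldl_cons, ih _ hr.2, ffStep_apply_of_ne C h y hr.1]

theorem ffGreedy_apply_of_notMem {l : List R} {r : R} (hr : r ∉ l) : ffGreedy C h l r = none :=
  foldl_ffStep_apply_of_notMem C h _ hr

theorem mem_of_ffGreedy_apply_isSome {l : List R} {r : R} (hr : (ffGreedy C h l r).isSome) :
    r ∈ l := by
  by_contra hnot
  simp [ffGreedy_apply_of_notMem C h hnot] at hr

theorem ffGreedy_append_cons_apply {a b : List R} {r : R} (hrb : r ∉ b) :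
    ffGreedy C h (a ++ r :: b) r = ffStep C h (ffGreedy C h a) r r := by
  rw [ffGreedy, List.foldl_append, List.foldl_cons, foldl_ffStep_apply_of_notMem C h _ hrb,
    ffGreedy]

end Greedy

end Placement

theorem stmt6_general {R : Type*} [Fintype R] [DecidableEq R]
    (C : ℕ → ℕ) (h : R → ℕ)
    (l : List R) (hnodup : l.Nodup) (hall : ∀ r : R, r ∈ l)
    (hsorted : l.Pairwise (fun a b => h a ≤ h b))
    (hfail : ∃ r, ffGreedy C h l r = none) :
    (∃ r, ffGreedy C h l r = none ∧
      (∑ j ∈ Finset.range (h r + 1), C j) < (univ.filter (fun r' => h r' ≤ h r)).card) ∧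
    ¬ ∃ y : R → ℕ, (∀ r, y r ≤ h r) ∧
        ∀ j, (univ.filter (fun r => y r = j)).card ≤ C j := by
  obtain ⟨r, hr⟩ := hfail
  obtain ⟨a, b, rfl⟩ := List.append_of_mem (hall r)
  have hr_notMem : r ∉ a ++ b := (List.nodup_cons.mp (List.nodup_middle.mp hnodup)).1
  have hstep : ffStep C h (ffGreedy C h a) r r = none := by
    rwa [← ffGreedy_append_cons_apply C h fun hb => hr_notMem (List.mem_append_right a hb)]
  have hviolated : ∑ j ∈ range (h r + 1), C j < #{r' | h r' ≤ h r} :=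
    sum_range_lt_card_of_saturated C h (ffGreedy C h a)
      (fun j => le_of_lowestFree_eq_none (lowestFree_eq_none_of_ffStep_self_eq_none C h hstep))
      (fun r' hr' => (List.pairwise_append.mp hsorted).2.2 r'
        (mem_of_ffGreedy_apply_isSome C h hr') r List.mem_cons_self)
      (ffGreedy_apply_of_notMem C h fun ha => hr_notMem (List.mem_append_left b ha)) le_rfl
  refine ⟨⟨r, hr, hviolated⟩, fun ⟨y, hy⟩ => ?_⟩
  exact (IsFeasiblePlacement.card_filter_le_sum hy (h r)).not_gt hviolated

/-- if the greedy (sorted by non-decreasing thresholds, place as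
low as possible) fails on some request `r`, then the prefix-sum condition is
violated at level `h r` and hence no feasible placement exists at all. -/
theorem stmt6 {R : Type*} [Fintype R] [DecidableEq R]
    (L : ℕ) (C : ℕ → ℕ) (h : R → ℕ) (hh : ∀ r, h r ≤ L)
    (l : List R) (hnodup : l.Nodup) (hall : ∀ r : R, r ∈ l)
    (hsorted : l.Pairwise (fun a b => h a ≤ h b))
    (hfail : ∃ r, ffGreedy C h l r = none) :
    (∃ r, ffGreedy C h l r = none ∧
      (∑ j ∈ Finset.range (h r + 1), C j) < (univ.filter (fun r' => h r' ≤ h r)).card) ∧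
    ¬ ∃ y : R → ℕ, (∀ r, y r ≤ h r) ∧
        ∀ j, (univ.filter (fun r => y r = j)).card ≤ C j :=
  stmt6_general C h l hnodup hall hsorted hfail
end

section
/- In the prefix-interval model with unit demands and strictly decreasing per-level cost ψ, an optimal (minimum-cost) feasible placement is obtained by: for levels ℓ = L down to 0, greedily filling level ℓ with as many requests as possible among those with h_r ≥ ℓ that are not yet placed, subject to capacity C_ℓ and to leaving enough requests to keep the remaining instance feasible. Equivalently, the maximum number of requests placeable at levels ≥ ℓ, over all feasible placements, is achieved simultaneously for all ℓ by a single placement. -/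
/-!
Existence is the greedy argument run from the top level down. If `y` maximizes every tail
count `#{r | t ≤ y r}` with `t > m`, then no feasible placement has more than
`min (C m + #{r | m + 1 ≤ y r}) #{r | m ≤ h r}` requests at levels `≥ m`, and raising as many
requests of `{r | y r < m ≤ h r}` to level `m` as the capacity `C m` allows attains this bound
without changing the tail counts above `m`.

Cost optimality is layer-cake summation:
`∑ r, ψ (y r) = |R| • ψ 0 - ∑ j, #{r | j < y r} • (ψ j - ψ (j + 1))`, and the increments
`ψ j - ψ (j + 1)` are nonnegative.
-/

open Finset

/-- Feasibility of a placement in the prefix-interval model. -/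
def pFeasible {R : Type*} [Fintype R] [DecidableEq R] (C : ℕ → ℕ) (h : R → ℕ)
    (y : R → ℕ) : Prop :=
  (∀ r, y r ≤ h r) ∧ ∀ j, (univ.filter (fun r => y r = j)).card ≤ C j

section LayerCake

variable {ι M : Type*} [Fintype ι] [AddCommGroup M]

theorem sum_comp_eq_card_nsmul_sub (ψ : ℕ → M) (y : ι → ℕ) {N : ℕ}
    (hN : ∀ i, y i ≤ N) :
    ∑ i, ψ (y i) =
      Fintype.card ι • ψ 0 - ∑ j ∈ range N, #{i | j < y i} • (ψ j - ψ (j + 1)) := by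
  have hterm (i : ι) :
      ψ (y i) = ψ 0 - ∑ j ∈ range N, if j < y i then ψ j - ψ (j + 1) else 0 := by
    have : (range N).filter (· < y i) = range (y i) := by
      ext j
      have := hN i
      simp only [mem_filter, mem_range]
      omega
    rw [← sum_filter, this, sum_range_sub', sub_sub_cancel]
  simp_rw [hterm, sum_sub_distrib, sum_const, card_univ]
  rw [sum_comm]
  simp_rw [← sum_filter, sum_const]

theorem sum_comp_le_sum_comp_of_card_le [PartialOrder M] [IsOrderedAddMonoid M] {ψ : ℕ → M}
    (hψ : Antitone ψ) {y y' : ι → ℕ}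
    (hdom : ∀ ℓ, #{i | ℓ ≤ y' i} ≤ #{i | ℓ ≤ y i}) :
    ∑ i, ψ (y i) ≤ ∑ i, ψ (y' i) := by
  set N := univ.sup fun i => max (y i) (y' i)
  have hN (i : ι) : max (y i) (y' i) ≤ N := le_sup (f := fun i => max (y i) (y' i)) (mem_univ i)
  rw [sum_comp_eq_card_nsmul_sub ψ y fun i => (le_max_left _ _).trans (hN i),
    sum_comp_eq_card_nsmul_sub ψ y' fun i => (le_max_right _ _).trans (hN i)]
  refine sub_le_sub_left (sum_le_sum fun j _ => nsmul_le_nsmul_left ?_ ?_) _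
  · exact sub_nonneg.2 (hψ j.le_succ)
  · simpa only [Nat.lt_iff_add_one_le] using hdom (j + 1)

end LayerCake

section Placement

variable {R : Type*} [Fintype R] {C : ℕ → ℕ} {h : R → ℕ}

theorem card_le_eq_card_eq_add_card_succ_le (y : R → ℕ) (m : ℕ) :
    #{r | m ≤ y r} = #{r | y r = m} + #{r | m + 1 ≤ y r} := by
  rw [← card_filter_add_card_filter_not (s := {r | m ≤ y r}) (fun r => y r = m),
    filter_filter, filter_filter]
  congr 2 <;> exact filter_congr fun r _ => by omega

theorem card_le_eq_card_le_add_card_lt_le {y : R → ℕ} (hy : ∀ r, y r ≤ h r) (m : ℕ) :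
    #{r | m ≤ h r} = #{r | m ≤ y r} + #{r | y r < m ∧ m ≤ h r} := by
  rw [← card_filter_add_card_filter_not (s := {r | m ≤ h r}) (fun r => m ≤ y r),
    filter_filter, filter_filter]
  congr 2 <;> exact filter_congr fun r _ => by have := hy r; omega

variable [DecidableEq R]

theorem pFeasible.card_le_le_min {y : R → ℕ} (hy : pFeasible C h y) (m : ℕ) :
    #{r | m ≤ y r} ≤ min (C m + #{r | m + 1 ≤ y r}) #{r | m ≤ h r} := by
  refine le_min ?_ (card_le_card fun r => ?_)
  · have := hy.2 m
    rw [card_le_eq_card_eq_add_card_succ_le]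
    omega
  · simp only [mem_filter, mem_univ, true_and]
    exact fun hr => hr.trans (hy.1 r)

section Raise

variable {y : R → ℕ} {S : Finset R} {m : ℕ}

theorem card_le_piecewise_of_lt {t : ℕ} (hS : ∀ r ∈ S, y r < m) (ht : m < t) :
    #{r | t ≤ (S.piecewise (fun _ => m) y : R → ℕ) r} = #{r | t ≤ y r} := by
  congr 1
  refine filter_congr fun r _ => ?_
  by_cases hr : r ∈ S
  · have := hS r hr
    simp only [piecewise_eq_of_mem _ _ _ hr]
    omega
  · rw [piecewise_eq_of_notMem _ _ _ hr]

theorem card_le_piecewise_eq_add_card (hS : ∀ r ∈ S, y r < m) :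
    #{r | m ≤ (S.piecewise (fun _ => m) y : R → ℕ) r} = #{r | m ≤ y r} + #S := by
  have : univ.filter (fun r => m ≤ (S.piecewise (fun _ => m) y : R → ℕ) r) =
      univ.filter (fun r => m ≤ y r) ∪ S := by
    ext r
    by_cases hr : r ∈ S <;> simp [hr]
  rw [this, card_union_of_disjoint (disjoint_left.2 fun r hr hrS => ?_)]
  have := hS r hrS
  simp only [mem_filter, mem_univ, true_and] at hr
  omega

theorem pFeasible.piecewise (hy : pFeasible C h y) (hS : ∀ r ∈ S, y r < m ∧ m ≤ h r)
    (hcap : #{r | y r = m} + #S ≤ C m) : pFeasible C h (S.piecewise (fun _ => m) y) := by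
  refine ⟨fun r => ?_, fun j => ?_⟩
  · by_cases hr : r ∈ S
    · rw [piecewise_eq_of_mem _ _ _ hr]
      exact (hS r hr).2
    · rw [piecewise_eq_of_notMem _ _ _ hr]
      exact hy.1 r
  · rcases eq_or_ne j m with rfl | hj
    · calc #{r | (S.piecewise (fun _ => j) y : R → ℕ) r = j}
          ≤ #(univ.filter (fun r => y r = j) ∪ S) :=
            card_le_card fun r => by by_cases hr : r ∈ S <;> simp [hr]
        _ ≤ C j := (card_union_le _ _).trans hcap
    · refine (card_le_card fun r => ?_).trans (hy.2 j)
      by_cases hr : r ∈ S <;> simp [hr, hj.symm]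

end Raise

theorem pFeasible.exists_card_le_eq_min {y : R → ℕ} (hy : pFeasible C h y) (m : ℕ) :
    ∃ y', pFeasible C h y' ∧ (∀ t, m < t → #{r | t ≤ y' r} = #{r | t ≤ y r}) ∧
      #{r | m ≤ y' r} = min (C m + #{r | m + 1 ≤ y r}) #{r | m ≤ h r} := by
  obtain ⟨S, hSA, hS⟩ := exists_subset_card_eq
    (min_le_right (C m - #{r | y r = m}) #{r | y r < m ∧ m ≤ h r})
  have hSA' : ∀ r ∈ S, y r < m ∧ m ≤ h r := fun r hr => (mem_filter.1 (hSA hr)).2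
  have hcap := hy.2 m
  refine ⟨S.piecewise (fun _ => m) y, hy.piecewise hSA' (by omega),
    fun t ht => card_le_piecewise_of_lt (fun r hr => (hSA' r hr).1) ht, ?_⟩
  rw [card_le_piecewise_eq_add_card fun r hr => (hSA' r hr).1, hS,
    card_le_eq_card_le_add_card_lt_le hy.1 m, card_le_eq_card_eq_add_card_succ_le y m]
  omega

def MaximizesTailCounts (C : ℕ → ℕ) (h : R → ℕ) (m : ℕ) (y : R → ℕ) : Prop :=
  pFeasible C h y ∧
    ∀ t, m ≤ t → ∀ z, pFeasible C h z → #{r | t ≤ z r} ≤ #{r | t ≤ y r}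

theorem maximizesTailCounts_of_sup_lt {y : R → ℕ} (hy : pFeasible C h y) {m : ℕ}
    (hm : univ.sup h < m) : MaximizesTailCounts C h m y := by
  refine ⟨hy, fun t ht z hz => ?_⟩
  rw [card_eq_zero.2 (filter_eq_empty_iff.2 fun r _ => ?_)]
  · exact Nat.zero_le _
  · exact not_le.2 ((hz.1 r).trans_lt ((le_sup (mem_univ r)).trans_lt (hm.trans_le ht)))

theorem MaximizesTailCounts.exists_pred {y : R → ℕ} {m : ℕ}
    (hy : MaximizesTailCounts C h (m + 1) y) : ∃ y', MaximizesTailCounts C h m y' := by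
  obtain ⟨y', hy', habove, hm⟩ := hy.1.exists_card_le_eq_min m
  refine ⟨y', hy', fun t ht z hz => ?_⟩
  rcases ht.eq_or_lt with rfl | ht
  · rw [hm]
    exact (hz.card_le_le_min m).trans
      (min_le_min_right _ (Nat.add_le_add_left (hy.2 (m + 1) le_rfl z hz) _))
  · rw [habove t ht]
    exact hy.2 t ht z hz

theorem exists_maximizesTailCounts (hfe : ∃ y, pFeasible C h y) (m : ℕ) :
    ∃ y, MaximizesTailCounts C h m y := by
  obtain ⟨y, hy⟩ := hfe
  exact Nat.decreasingInduction (motive := fun k _ => ∃ y, MaximizesTailCounts C h k y)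
    (fun _ _ ⟨_, hy'⟩ => hy'.exists_pred)
    ⟨y, maximizesTailCounts_of_sup_lt hy (lt_max_of_lt_right (Nat.lt_succ_self _))⟩
    (le_max_left m (univ.sup h + 1))

end Placement

/-- there exists a feasible placement that simultaneously, for
every level `ℓ`, maximizes the number of requests placed at levels `≥ ℓ`; and
any placement with this property is cost-optimal for every strictly decreasing
per-level cost `ψ`. -/
theorem stmt8 {R : Type*} [Fintype R] [DecidableEq R]
    (C : ℕ → ℕ) (h : R → ℕ)
    (hfe : ∃ y : R → ℕ, pFeasible C h y) :
    (∃ y : R → ℕ, pFeasible C h y ∧ ∀ ℓ : ℕ, ∀ y' : R → ℕ, pFeasible C h y' →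
        (univ.filter (fun r => ℓ ≤ y' r)).card ≤ (univ.filter (fun r => ℓ ≤ y r)).card) ∧
    (∀ y : R → ℕ, pFeasible C h y →
      (∀ ℓ : ℕ, ∀ y' : R → ℕ, pFeasible C h y' →
        (univ.filter (fun r => ℓ ≤ y' r)).card ≤ (univ.filter (fun r => ℓ ≤ y r)).card) →
      ∀ ψ : ℕ → ℝ, StrictAnti ψ → ∀ y' : R → ℕ, pFeasible C h y' →
        ∑ r, ψ (y r) ≤ ∑ r, ψ (y' r)) := by
  refine ⟨?_, fun y _ hmax ψ hψ y' hy' =>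
    sum_comp_le_sum_comp_of_card_le hψ.antitone fun ℓ => hmax ℓ y' hy'⟩
  obtain ⟨y, hy, hmax⟩ := exists_maximizesTailCounts hfe 0
  exact ⟨y, hy, fun ℓ => hmax ℓ ℓ.zero_le⟩
end
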